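/- For every even integer r with 0 ≤ r ≤ n−2, Σ_{β=1}^{l} Σ_{p,q,u,v=1}^{n} (T_r)^{pq}_{uv} A^β{}_p^u A^β{}_q^v = (r+1)(r+2) · S_{r+2}. -/
import Mathlib


open scoped BigOperators

noncomputable section

/-- The generalized Kronecker symbol `δ^{i₁…i_r}_{j₁…j_r}`:
the determinant of the `r × r` matrix whose `(a,b)` entry is `δ^{i_a}_{j_b}`. -/
def gKron {n r : ℕ} (i j : Fin r → Fin n) : ℝ :=
  Matrix.det (Matrix.of fun a b : Fin r => if i a = j b then (1 : ℝ) else 0)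

/-- The pairing `⟨B_{i₁}^{j₁}, B_{i₂}^{j₂}⟩ = Σ_α A^α{}_{i₁}^{j₁} A^α{}_{i₂}^{j₂}`.
Here `A α` is a matrix with the convention that `A^α{}_i^j` (row `j`, column `i`)
is `A α j i`. -/
def pairing {n l : ℕ} (A : Fin l → Matrix (Fin n) (Fin n) ℝ)
    (i₁ j₁ i₂ j₂ : Fin n) : ℝ :=
  ∑ α : Fin l, A α j₁ i₁ * A α j₂ i₂

/-- The product `⟨B_{i₁}^{j₁},B_{i₂}^{j₂}⟩ ⋯ ⟨B_{i_{2s-1}}^{j_{2s-1}},B_{i_{2s}}^{j_{2s}}⟩`. -/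
def pairProd {n l : ℕ} (A : Fin l → Matrix (Fin n) (Fin n) ℝ) (s : ℕ)
    (i j : Fin (2 * s) → Fin n) : ℝ :=
  ∏ t : Fin s,
    pairing A (i ⟨2 * t.1, by omega⟩) (j ⟨2 * t.1, by omega⟩)
      (i ⟨2 * t.1 + 1, by omega⟩) (j ⟨2 * t.1 + 1, by omega⟩)

/-- The `r`-th mean curvature `S_r` for `r = 2s`. -/
def meanCurv {n l : ℕ} (A : Fin l → Matrix (Fin n) (Fin n) ℝ) (s : ℕ) : ℝ :=
  (1 / (Nat.factorial (2 * s) : ℝ)) *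
    ∑ i : Fin (2 * s) → Fin n, ∑ j : Fin (2 * s) → Fin n,
      gKron i j * pairProd A s i j

/-- The generalized Newton transformation `T_r` for `r = 2s`; the entry
`(T_r)^p_u` is in row `p`, column `u`. -/
def newton {n l : ℕ} (A : Fin l → Matrix (Fin n) (Fin n) ℝ) (s : ℕ) :
    Matrix (Fin n) (Fin n) ℝ :=
  Matrix.of fun p u =>
    (1 / (Nat.factorial (2 * s) : ℝ)) *
      ∑ i : Fin (2 * s) → Fin n, ∑ j : Fin (2 * s) → Fin n,
        gKron (Fin.snoc i p) (Fin.snoc j u) * pairProd A s i j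

/-- The transformation `T_q^α` for odd `q = 2s + 1`; the entry `(T_q^α)^p_u`
is in row `p`, column `u`. -/
def newtonOdd {n l : ℕ} (A : Fin l → Matrix (Fin n) (Fin n) ℝ) (s : ℕ) (α : Fin l) :
    Matrix (Fin n) (Fin n) ℝ :=
  Matrix.of fun p u =>
    (1 / (Nat.factorial (2 * s + 1) : ℝ)) *
      ∑ i : Fin (2 * s) → Fin n, ∑ j : Fin (2 * s) → Fin n, ∑ a : Fin n, ∑ b : Fin n,
        gKron (Fin.snoc (Fin.snoc i a) p) (Fin.snoc (Fin.snoc j b) u)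
          * pairProd A s i j * A α b a


/-- `(T_r)^{pq}_{uv}`, the Newton transformation with two extra index pairs,
for even `r = 2s`. -/
def newton2 {n l : ℕ} (A : Fin l → Matrix (Fin n) (Fin n) ℝ) (s : ℕ)
    (p q u v : Fin n) : ℝ :=
  (1 / (Nat.factorial (2 * s) : ℝ)) *
    ∑ i : Fin (2 * s) → Fin n, ∑ j : Fin (2 * s) → Fin n,
      gKron (Fin.snoc (Fin.snoc i p) q) (Fin.snoc (Fin.snoc j u) v) * pairProd A s i j

/-! ### Auxiliary lemmas -/

/-- The equivalence between `(Fin m → Fin n) × Fin n` and `Fin (m+1) → Fin n`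
given by `snoc`. -/
def snocE (n m : ℕ) : ((Fin m → Fin n) × Fin n) ≃ (Fin (m+1) → Fin n) where
  toFun p := Fin.snoc p.1 p.2
  invFun f := (fun i => f i.castSucc, f (Fin.last m))
  left_inv p := by simp
  right_inv f := by
    funext i
    refine Fin.lastCases ?_ ?_ i <;> simp

lemma sum_snoc {n m : ℕ} (F : (Fin (m+1) → Fin n) → ℝ) :
    ∑ f : Fin (m+1) → Fin n, F f
      = ∑ g : Fin m → Fin n, ∑ x : Fin n, F (Fin.snoc g x) := by
  rw [← Fintype.sum_prod_type (f := fun p : (Fin m → Fin n) × Fin n => F (Fin.snoc p.1 p.2))]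
  exact ((snocE n m).sum_comp F).symm

lemma snoc_mk_lt {n m : ℕ} (f : Fin m → Fin n) (x : Fin n) (k : ℕ) (h : k < m) (h' : k < m+1) :
    (Fin.snoc f x : Fin (m+1) → Fin n) ⟨k, h'⟩ = f ⟨k, h⟩ := by
  have e : (⟨k, h'⟩ : Fin (m+1)) = Fin.castSucc ⟨k, h⟩ := rfl
  rw [e, Fin.snoc_castSucc]

lemma snoc_mk_last {n m : ℕ} (f : Fin m → Fin n) (x : Fin n) (h' : m < m+1) :
    (Fin.snoc f x : Fin (m+1) → Fin n) ⟨m, h'⟩ = x := by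
  have e : (⟨m, h'⟩ : Fin (m+1)) = Fin.last m := rfl
  rw [e, Fin.snoc_last]

lemma pairProd_snoc {n l : ℕ} (A : Fin l → Matrix (Fin n) (Fin n) ℝ) (s : ℕ)
    (i j : Fin (2 * s) → Fin n) (p q u v : Fin n) :
    pairProd A (s+1) (Fin.snoc (Fin.snoc i p) q) (Fin.snoc (Fin.snoc j u) v)
      = pairProd A s i j * pairing A p u q v := by
  unfold pairProd
  rw [Fin.prod_univ_castSucc]
  congr 1
  · refine Finset.prod_congr rfl fun t _ => ?_
    have ht : t.1 < s := t.2
    have h1 : 2 * (t.castSucc).1 < 2 * s := by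
      have : (t.castSucc).1 = t.1 := rfl
      omega
    have h2 : 2 * (t.castSucc).1 + 1 < 2 * s := by
      have : (t.castSucc).1 = t.1 := rfl
      omega
    have e1 : (Fin.snoc (Fin.snoc i p) q : Fin (2*s+1+1) → Fin n) ⟨2 * (t.castSucc).1, by omega⟩
        = i ⟨2 * (t.castSucc).1, h1⟩ := by
      rw [snoc_mk_lt _ _ _ (by omega : 2 * (t.castSucc).1 < 2*s+1)]
      exact snoc_mk_lt _ _ _ h1 _
    have e2 : (Fin.snoc (Fin.snoc j u) v : Fin (2*s+1+1) → Fin n) ⟨2 * (t.castSucc).1, by omega⟩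
        = j ⟨2 * (t.castSucc).1, h1⟩ := by
      rw [snoc_mk_lt _ _ _ (by omega : 2 * (t.castSucc).1 < 2*s+1)]
      exact snoc_mk_lt _ _ _ h1 _
    have e3 : (Fin.snoc (Fin.snoc i p) q : Fin (2*s+1+1) → Fin n) ⟨2 * (t.castSucc).1 + 1, by omega⟩
        = i ⟨2 * (t.castSucc).1 + 1, h2⟩ := by
      rw [snoc_mk_lt _ _ _ (by omega : 2 * (t.castSucc).1 + 1 < 2*s+1)]
      exact snoc_mk_lt _ _ _ h2 _
    have e4 : (Fin.snoc (Fin.snoc j u) v : Fin (2*s+1+1) → Fin n) ⟨2 * (t.castSucc).1 + 1, by omega⟩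
        = j ⟨2 * (t.castSucc).1 + 1, h2⟩ := by
      rw [snoc_mk_lt _ _ _ (by omega : 2 * (t.castSucc).1 + 1 < 2*s+1)]
      exact snoc_mk_lt _ _ _ h2 _
    rw [e1, e2, e3, e4]
    rfl
  · have e1 : (Fin.snoc (Fin.snoc i p) q : Fin (2*s+1+1) → Fin n) ⟨2 * (Fin.last s).1, by omega⟩ = p := by
      rw [snoc_mk_lt _ _ _ (by omega : 2 * (Fin.last s).1 < 2*s+1)]
      exact snoc_mk_last _ _ _
    have e2 : (Fin.snoc (Fin.snoc j u) v : Fin (2*s+1+1) → Fin n) ⟨2 * (Fin.last s).1, by omega⟩ = u := by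
      rw [snoc_mk_lt _ _ _ (by omega : 2 * (Fin.last s).1 < 2*s+1)]
      exact snoc_mk_last _ _ _
    have e3 : (Fin.snoc (Fin.snoc i p) q : Fin (2*s+1+1) → Fin n) ⟨2 * (Fin.last s).1 + 1, by omega⟩ = q :=
      snoc_mk_last _ _ _
    have e4 : (Fin.snoc (Fin.snoc j u) v : Fin (2*s+1+1) → Fin n) ⟨2 * (Fin.last s).1 + 1, by omega⟩ = v :=
      snoc_mk_last _ _ _
    rw [e1, e2, e3, e4]

lemma reorder6 {α β γ δ ε ζ : Type*} [Fintype α] [Fintype β] [Fintype γ] [Fintype δ]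
    [Fintype ε] [Fintype ζ] (f : α → β → γ → δ → ε → ζ → ℝ) :
    ∑ a : α, ∑ b : β, ∑ c : γ, ∑ d : δ, ∑ e : ε, ∑ g : ζ, f a b c d e g
      = ∑ e : ε, ∑ a : α, ∑ b : β, ∑ g : ζ, ∑ c : γ, ∑ d : δ, f a b c d e g := by
  conv_lhs => enter [2, a, 2, b, 2, c]; rw [Finset.sum_comm]
  conv_lhs => enter [2, a, 2, b]; rw [Finset.sum_comm]
  conv_lhs => enter [2, a]; rw [Finset.sum_comm]
  rw [Finset.sum_comm]
  conv_lhs => enter [2, e, 2, a, 2, b, 2, c]; rw [Finset.sum_comm]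
  conv_lhs => enter [2, e, 2, a, 2, b]; rw [Finset.sum_comm]

lemma sum_snoc2 {n s : ℕ} (T : (Fin (2*s+1+1) → Fin n) → ℝ) :
    (∑ f : Fin (2*s+1+1) → Fin n, T f)
      = ∑ i : Fin (2*s) → Fin n, ∑ p : Fin n, ∑ q : Fin n,
          T (Fin.snoc (Fin.snoc i p) q) := by
  rw [sum_snoc T]
  exact sum_snoc _

lemma meanCurv_succ {n l : ℕ} (A : Fin l → Matrix (Fin n) (Fin n) ℝ) (s : ℕ) :
    meanCurv A (s+1) = (1 / (Nat.factorial (2*s+1+1) : ℝ)) *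
      ∑ i : Fin (2*s) → Fin n, ∑ p : Fin n, ∑ q : Fin n,
        ∑ j : Fin (2*s) → Fin n, ∑ u : Fin n, ∑ v : Fin n,
          gKron (Fin.snoc (Fin.snoc i p) q) (Fin.snoc (Fin.snoc j u) v)
            * pairProd A s i j * pairing A p u q v := by
  unfold meanCurv
  congr 1
  refine (sum_snoc2 (fun i' => ∑ j' : Fin (2*s+1+1) → Fin n,
      gKron i' j' * pairProd A (s+1) i' j')).trans ?_
  refine Finset.sum_congr rfl fun i _ => ?_
  refine Finset.sum_congr rfl fun p _ => ?_
  refine Finset.sum_congr rfl fun q _ => ?_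
  refine (sum_snoc2 (fun j' => gKron (Fin.snoc (Fin.snoc i p) q) j'
      * pairProd A (s+1) (Fin.snoc (Fin.snoc i p) q) j')).trans ?_
  refine Finset.sum_congr rfl fun j _ => ?_
  refine Finset.sum_congr rfl fun u _ => ?_
  refine Finset.sum_congr rfl fun v _ => ?_
  rw [pairProd_snoc, mul_assoc]

/-- For every even integer `r = 2s` with `0 ≤ r ≤ n−2`,
`Σ_β Σ_{p,q,u,v} (T_r)^{pq}_{uv} A^β{}_p^u A^β{}_q^v = (r+1)(r+2) S_{r+2}`,
where `A^β{}_p^u = A β u p` and `S_{r+2} = meanCurv A (s+1)`. -/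
theorem stmt8 (n l : ℕ) (hn : 1 ≤ n) (hl : 1 ≤ l)
    (A : Fin l → Matrix (Fin n) (Fin n) ℝ) (r s : ℕ) (hr : r = 2 * s)
    (hrn : r ≤ n - 2) :
    ∑ β : Fin l, ∑ p : Fin n, ∑ q : Fin n, ∑ u : Fin n, ∑ v : Fin n,
        newton2 A s p q u v * A β u p * A β v q
      = ((r : ℝ) + 1) * ((r : ℝ) + 2) * meanCurv A (s + 1) := by
  subst hr
  -- Step 1: bring the β-sum inside and recognize `pairing`.
  have step1 : (∑ β : Fin l, ∑ p : Fin n, ∑ q : Fin n, ∑ u : Fin n, ∑ v : Fin n,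
        newton2 A s p q u v * A β u p * A β v q)
      = ∑ p : Fin n, ∑ q : Fin n, ∑ u : Fin n, ∑ v : Fin n,
          newton2 A s p q u v * pairing A p u q v := by
    rw [Finset.sum_comm]
    refine Finset.sum_congr rfl fun p _ => ?_
    rw [Finset.sum_comm]
    refine Finset.sum_congr rfl fun q _ => ?_
    rw [Finset.sum_comm]
    refine Finset.sum_congr rfl fun u _ => ?_
    rw [Finset.sum_comm]
    refine Finset.sum_congr rfl fun v _ => ?_
    rw [pairing, Finset.mul_sum]
    exact Finset.sum_congr rfl fun β _ => by ring
  rw [step1]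
  -- Step 2: expand `newton2` and pull the constant out.
  have step2 : (∑ p : Fin n, ∑ q : Fin n, ∑ u : Fin n, ∑ v : Fin n,
        newton2 A s p q u v * pairing A p u q v)
      = (1 / (Nat.factorial (2*s) : ℝ)) *
          ∑ p : Fin n, ∑ q : Fin n, ∑ u : Fin n, ∑ v : Fin n,
            ∑ i : Fin (2*s) → Fin n, ∑ j : Fin (2*s) → Fin n,
              gKron (Fin.snoc (Fin.snoc i p) q) (Fin.snoc (Fin.snoc j u) v)
                * pairProd A s i j * pairing A p u q v := by
    rw [Finset.mul_sum]
    refine Finset.sum_congr rfl fun p _ => ?_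
    rw [Finset.mul_sum]
    refine Finset.sum_congr rfl fun q _ => ?_
    rw [Finset.mul_sum]
    refine Finset.sum_congr rfl fun u _ => ?_
    rw [Finset.mul_sum]
    refine Finset.sum_congr rfl fun v _ => ?_
    rw [newton2, mul_assoc]
    congr 1
    rw [Finset.sum_mul]
    refine Finset.sum_congr rfl fun i _ => ?_
    rw [Finset.sum_mul]
  rw [step2]
  -- Step 3: rewrite the mean curvature via the snoc decomposition.
  rw [meanCurv_succ]
  -- Step 4: reorder the sums.
  rw [reorder6 (fun p q u v (i : Fin (2*s) → Fin n) (j : Fin (2*s) → Fin n) =>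
      gKron (Fin.snoc (Fin.snoc i p) q) (Fin.snoc (Fin.snoc j u) v)
        * pairProd A s i j * pairing A p u q v)]
  -- Step 5: the factorial identity.
  rw [← mul_assoc]
  congr 1
  have h0 : ((2*s+1+1).factorial : ℝ) = ((2*s+1+1 : ℕ) : ℝ) * ((2*s+1 : ℕ) : ℝ) * ((2*s).factorial : ℝ) := by
    rw [Nat.factorial_succ, Nat.factorial_succ]
    push_cast
    ring
  have h1 : ((2*s).factorial : ℝ) ≠ 0 := Nat.cast_ne_zero.mpr (Nat.factorial_ne_zero _)
  have h2 : ((2*s+1+1).factorial : ℝ) ≠ 0 := Nat.cast_ne_zero.mpr (Nat.factorial_ne_zero _)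
  field_simp
  rw [h0]
  push_cast
  ring
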